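/- arXiv:2404.10962 — 5 statements merged into one kernel-verified Lean document; each statement's English description precedes it below -/
import Mathlib

section
/- For every finite simple graph G, the number of dominating sets of G is odd. -/
open SimpleGraph

/-- `D` is a dominating set of `G`: every vertex not in `D` has a neighbour in `D`. -/
def IsDomSet {V : Type*} (G : SimpleGraph V) (D : Set V) : Prop :=
  ∀ v ∉ D, ∃ u ∈ D, G.Adj u v

/-- The dominating graph of `G`: vertices are dominating sets of `G`, two dominating
sets are adjacent iff their symmetric difference has exactly one element. -/
def DomGraph {V : Type*} (G : SimpleGraph V) :
    SimpleGraph {D : Set V // IsDomSet G D} where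
  Adj A B := (symmDiff A.1 B.1).ncard = 1
  symm := ⟨fun A B h => by
    have h' : (symmDiff A.1 B.1).ncard = 1 := h
    show (symmDiff B.1 A.1).ncard = 1
    rwa [symmDiff_comm]⟩
  loopless := ⟨fun A h => by
    have h' : (symmDiff A.1 A.1).ncard = 1 := h
    simp [symmDiff_self, Set.bot_eq_empty] at h'⟩

/-- The `k`-dominating graph of `G`: vertices are dominating sets of `G` of cardinality
at most `k`, two such sets are adjacent iff their symmetric difference has exactly one
element. -/
def KDomGraph {V : Type*} (G : SimpleGraph V) (k : ℕ) :
    SimpleGraph {D : Set V // IsDomSet G D ∧ D.ncard ≤ k} where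
  Adj A B := (symmDiff A.1 B.1).ncard = 1
  symm := ⟨fun A B h => by
    have h' : (symmDiff A.1 B.1).ncard = 1 := h
    show (symmDiff B.1 A.1).ncard = 1
    rwa [symmDiff_comm]⟩
  loopless := ⟨fun A h => by
    have h' : (symmDiff A.1 A.1).ncard = 1 := h
    simp [symmDiff_self, Set.bot_eq_empty] at h'⟩

/-- A graph is Eulerian iff every vertex has even degree and any two edges lie in the
same connected component (i.e. at most one component contains an edge). -/
def IsEulerian {W : Type*} (H : SimpleGraph W) : Prop :=
  (∀ v : W, Even (H.neighborSet v).ncard) ∧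
  ∀ u v x y : W, H.Adj u v → H.Adj x y → H.Reachable u x

/-! Count the pairs `(D, S)` of vertex sets such that no vertex of `D` equals or is adjacent to a
vertex of `S`. For fixed `D` the admissible `S` are the subsets of the set of vertices that `D`
leaves undominated, so there are `2 ^ k` of them, which is odd exactly when `D` is dominating:
the number of pairs has the parity of the number of dominating sets. On the other hand the
condition is symmetric in `D` and `S`, so swapping is an involution on the pairs whose only fixed
point is `(∅, ∅)`, and the number of pairs is odd. -/

theorem Nat.card_rel_modEq_card_diag_of_symm {β : Type*} [Finite β] {R : β → β → Prop}
    (hR : ∀ a b, R a b → R b a) :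
    Nat.card {p : β × β // R p.1 p.2} ≡ Nat.card {a // R a a} [MOD 2] := by
  classical
  have := Fintype.ofFinite β
  let swap : Function.End {p : β × β // R p.1 p.2} := fun p => ⟨p.1.swap, hR _ _ p.2⟩
  have hswap : swap ^ 2 ^ 1 = 1 := rfl
  have eq_of_fixed (p : Function.fixedPoints swap) : p.1.1.1 = p.1.1.2 :=
    congrArg (·.1.2) p.2
  let diag : {a // R a a} ≃ Function.fixedPoints swap :=
    { toFun a := ⟨⟨(a.1, a.1), a.2⟩, rfl⟩
      invFun p := ⟨p.1.1.1, by simpa only [← eq_of_fixed p] using p.1.2⟩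
      left_inv _ := rfl
      right_inv p := by ext <;> simp [eq_of_fixed p] }
  rw [Nat.card_eq_fintype_card, Nat.card_congr diag, Nat.card_eq_fintype_card]
  exact Equiv.Perm.card_fixedPoints_modEq hswap

namespace SimpleGraph

variable {V : Type*} (G : SimpleGraph V)

def FarApart (D S : Set V) : Prop := ∀ d ∈ D, ∀ s ∈ S, d ≠ s ∧ ¬ G.Adj d s

def undominated (D : Set V) : Set V := {v | v ∉ D ∧ ∀ d ∈ D, ¬ G.Adj d v}

variable {G}

lemma FarApart.symm {D S : Set V} (h : G.FarApart D S) : G.FarApart S D := fun s hs d hd =>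
  ⟨(h d hd s hs).1.symm, fun hsd => (h d hd s hs).2 hsd.symm⟩

lemma farApart_self_iff {D : Set V} : G.FarApart D D ↔ D = ∅ := by
  refine ⟨fun h => Set.eq_empty_of_forall_notMem fun d hd => (h d hd d hd).1 rfl, ?_⟩
  rintro rfl
  simp [FarApart]

lemma farApart_iff_subset_undominated {D S : Set V} :
    G.FarApart D S ↔ S ⊆ G.undominated D := by
  simp only [FarApart, undominated, Set.subset_def, Set.mem_ofPred_eq]
  grind

lemma isDomSet_iff_undominated_eq_empty {D : Set V} : IsDomSet G D ↔ G.undominated D = ∅ := by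
  simp only [IsDomSet, undominated, Set.eq_empty_iff_forall_notMem, Set.mem_ofPred_eq]
  grind

lemma card_farApart_self : Nat.card {D : Set V // G.FarApart D D} = 1 := by
  simp only [farApart_self_iff]
  exact Nat.card_unique

variable [Finite V]

lemma card_farApart_right (D : Set V) :
    Nat.card {S // G.FarApart D S} = 2 ^ (G.undominated D).ncard := by
  simp only [farApart_iff_subset_undominated]
  exact (Nat.card_coe_set_eq _).trans (Set.ncard_powerset _)

lemma card_farApart_modEq_card_isDomSet :
    Nat.card {p : Set V × Set V // G.FarApart p.1 p.2} ≡ Nat.card {D // IsDomSet G D} [MOD 2] := by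
  classical
  have := Fintype.ofFinite V
  rw [← ZMod.natCast_eq_natCast_iff, Nat.card_congr (Equiv.subtypeProdEquivSigmaSubtype _),
    Nat.card_sigma, Nat.card_eq_fintype_card (α := {D // IsDomSet G D}), Fintype.card_subtype,
    ← Finset.sum_boole]
  push_cast
  refine Finset.sum_congr rfl fun D _ => ?_
  rw [card_farApart_right, isDomSet_iff_undominated_eq_empty, ← Set.ncard_eq_zero]
  push_cast
  rw [show (2 : ZMod 2) = 0 from rfl, zero_pow_eq]
  congr

end SimpleGraph

/-- The number of dominating sets of a finite graph is odd. -/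
theorem dominating_sets_odd {V : Type*} [Fintype V] (G : SimpleGraph V) :
    Odd (Nat.card {D : Set V // IsDomSet G D}) := by
  have pairs := Nat.card_rel_modEq_card_diag_of_symm fun D S (h : G.FarApart D S) => h.symm
  rw [SimpleGraph.card_farApart_self] at pairs
  exact Nat.odd_iff.2 (G.card_farApart_modEq_card_isDomSet.symm.trans pairs)
end

section
/- Let G and H be finite simple graphs on disjoint vertex sets and let G ⊔ H denote their disjoint union. Then the dominating graph D(G ⊔ H) is isomorphic to the Cartesian (box) product D(G) □ D(H). -/
open SimpleGraph

/-! A set `D` of vertices of `G ⊕g H` dominates iff its traces `Sum.inl ⁻¹' D` and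
`Sum.inr ⁻¹' D` dominate `G` and `H`, so `D ↦ (Sum.inl ⁻¹' D, Sum.inr ⁻¹' D)` is a bijection
between the vertex sets of the two graphs. Cardinality is additive over the two summands, so
`D ∆ D'` is a singleton iff one of the two traces of it is a singleton and the other is empty:
exactly one coordinate moves along an edge while the other stays fixed. -/

namespace Set

variable {α β : Type*}

theorem encard_eq_encard_preimage_inl_add_encard_preimage_inr (s : Set (α ⊕ β)) :
    s.encard = (Sum.inl ⁻¹' s).encard + (Sum.inr ⁻¹' s).encard := by
  conv_lhs => rw [← image_preimage_inl_union_image_preimage_inr s]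
  rw [encard_union_eq disjoint_image_inl_image_inr, Sum.inl_injective.encard_image,
    Sum.inr_injective.encard_image]

theorem _root_.ENat.add_eq_one_iff {m n : ℕ∞} : m + n = 1 ↔ m = 0 ∧ n = 1 ∨ m = 1 ∧ n = 0 := by
  cases m <;> cases n <;> norm_cast <;> simp [Nat.add_eq_one_iff]

theorem ncard_eq_one_iff_preimage_inl_inr (s : Set (α ⊕ β)) :
    s.ncard = 1 ↔ (Sum.inl ⁻¹' s).ncard = 1 ∧ Sum.inr ⁻¹' s = ∅ ∨
      Sum.inl ⁻¹' s = ∅ ∧ (Sum.inr ⁻¹' s).ncard = 1 := by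
  simp only [ncard_eq_one, ← encard_eq_one, ← encard_eq_zero]
  rw [encard_eq_encard_preimage_inl_add_encard_preimage_inr, ENat.add_eq_one_iff]
  tauto

theorem ncard_symmDiff_eq_one_iff_preimage_inl_inr (s t : Set (α ⊕ β)) :
    (symmDiff s t).ncard = 1 ↔
      (symmDiff (Sum.inl ⁻¹' s) (Sum.inl ⁻¹' t)).ncard = 1 ∧ Sum.inr ⁻¹' s = Sum.inr ⁻¹' t ∨
      (symmDiff (Sum.inr ⁻¹' s) (Sum.inr ⁻¹' t)).ncard = 1 ∧ Sum.inl ⁻¹' s = Sum.inl ⁻¹' t := by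
  simp only [ncard_eq_one_iff_preimage_inl_inr, preimage_symmDiff, symmDiff_eq_empty]
  tauto

end Set

section Sum

variable {α β : Type*} (G : SimpleGraph α) (H : SimpleGraph β)

theorem isDomSet_sum_iff (D : Set (α ⊕ β)) :
    IsDomSet (G ⊕g H) D ↔ IsDomSet G (Sum.inl ⁻¹' D) ∧ IsDomSet H (Sum.inr ⁻¹' D) := by
  simp [IsDomSet, Sum.forall, Sum.exists]

def domSetSumEquiv :
    {D // IsDomSet (G ⊕g H) D} ≃ {D // IsDomSet G D} × {D // IsDomSet H D} :=
  (Set.sumEquiv.toEquiv.subtypeEquiv (isDomSet_sum_iff G H)).trans Equiv.subtypeProdEquivProd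

end Sum

theorem domGraph_sum_iso_boxProd_general {α β : Type*}
    (G : SimpleGraph α) (H : SimpleGraph β) :
    Nonempty (DomGraph (G ⊕g H) ≃g (DomGraph G □ DomGraph H)) := by
  refine ⟨⟨domSetSumEquiv G H, @fun D D' => ?_⟩⟩
  simp only [boxProd_adj, Subtype.ext_iff]
  exact (Set.ncard_symmDiff_eq_one_iff_preimage_inl_inr D.1 D'.1).symm

/-- The dominating graph of a disjoint union is isomorphic to the box product of the
dominating graphs. -/
theorem domGraph_sum_iso_boxProd {α β : Type*} [Fintype α] [Fintype β]
    (G : SimpleGraph α) (H : SimpleGraph β) :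
    Nonempty (DomGraph (G ⊕g H) ≃g (DomGraph G □ DomGraph H)) :=
  domGraph_sum_iso_boxProd_general G H
end

section
/- Let G be a connected finite simple graph on n ≥ 2 vertices and let ℓ ∈ {1, …, n−1} be such that (1) some set of ℓ vertices of G dominates G, (2) some set of ℓ vertices of G does not dominate G, and (3) every set of ℓ+1 vertices of G dominates G. Then the dominating graph D(G) has at least one vertex of even degree and at least one vertex of odd degree. -/
/-! In `D(G)` a dominating set `D` has degree `n - c(D)`, where `c(D)` is the size of
`criticalSet G D`, the vertices `v ∈ D` for which `D \ {v}` no longer dominates; the full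
vertex set has degree `n`, so it suffices to find an `(ℓ + 1)`-set `D` with `c(D)` odd.

Since every `(ℓ + 1)`-set dominates, a non-dominating `ℓ`-set is the complement of a closed
neighbourhood `N[w]`. Suppose every `c(D)` with `|D| = ℓ + 1` is even. Adding `x ∈ N[w]` to
`N[w]ᶜ` makes `x` critical, so there is a second critical vertex `y`, and
`N[u] = N[w] - x + y` for some `u`. For `x = w` this makes `y = b` an open twin of `w`;
for `x ∈ N(w)` it gives `u ∈ N(w)` with `N[u] = N[w] - x + b`, and `x ↦ u` is injective,
hence onto `N(w)`. So `N[w] ∪ {b}` is closed under adjacency, i.e. all of `G`; then `ℓ = 1`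
while no vertex is adjacent to all others, contradicting the existence of a dominating
`ℓ`-set. -/

open SimpleGraph

open Set

namespace SimpleGraph

variable {V : Type*} (G : SimpleGraph V)

def closedNeighborSet (v : V) : Set V := insert v (G.neighborSet v)

variable {G}

@[simp]
lemma mem_closedNeighborSet {v w : V} : w ∈ G.closedNeighborSet v ↔ w = v ∨ G.Adj v w :=
  Iff.rfl

lemma self_mem_closedNeighborSet (v : V) : v ∈ G.closedNeighborSet v := mem_insert v _

lemma Preconnected.eq_univ_of_adj_mem (hG : G.Preconnected) {s : Set V}
    (hs : ∀ a ∈ s, ∀ c, G.Adj a c → c ∈ s) {v : V} (hv : v ∈ s) : s = univ := by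
  refine eq_univ_of_forall fun c => ?_
  obtain ⟨p⟩ := hG v c
  induction p with
  | nil => exact hv
  | cons hadj _ ih => exact ih (hs _ hv _ hadj)

end SimpleGraph

section

variable {V : Type*} {G : SimpleGraph V}

lemma IsDomSet.mono {S T : Set V} (hS : IsDomSet G S) (h : S ⊆ T) : IsDomSet G T :=
  fun v hv => (hS v fun hvS => hv (h hvS)).imp fun _ ⟨hu, hadj⟩ => ⟨h hu, hadj⟩

lemma not_isDomSet_iff {S : Set V} :
    ¬ IsDomSet G S ↔ ∃ u, S ⊆ (G.closedNeighborSet u)ᶜ := by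
  simp only [IsDomSet, subset_def, mem_compl_iff, mem_closedNeighborSet]
  push Not
  refine exists_congr fun u =>
    ⟨fun ⟨hu, h⟩ z hz => ?_, fun h => ⟨fun hu => ?_, fun z hz => ?_⟩⟩
  · exact ⟨fun hzu => hu (hzu ▸ hz), fun hadj => h z hz hadj.symm⟩
  · exact (h u hu).1 rfl
  · exact fun hadj => (h z hz).2 hadj.symm

lemma isDomSet_singleton_iff {s : V} : IsDomSet G {s} ↔ G.closedNeighborSet s = univ := by
  simp [IsDomSet, eq_univ_iff_forall, or_iff_not_imp_left]

variable (G) in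
def criticalSet (D : Set V) : Set V := {v ∈ D | ¬ IsDomSet G (D \ {v})}

lemma isDomSet_symmDiff_singleton_iff {D : Set V} (hD : IsDomSet G D) {v : V} :
    IsDomSet G (symmDiff D {v}) ↔ v ∉ criticalSet G D := by
  by_cases hv : v ∈ D
  · rw [symmDiff_of_ge (singleton_subset_iff.mpr hv)]
    simp [criticalSet, hv]
  · rw [(disjoint_singleton_right.mpr hv).symmDiff_eq_sup]
    exact iff_of_true (hD.mono le_sup_left) fun h => hv h.1

lemma ncard_neighborSet_domGraph (d : {D : Set V // IsDomSet G D}) :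
    ((DomGraph G).neighborSet d).ncard = {v | IsDomSet G (symmDiff d.1 {v})}.ncard := by
  symm
  refine ncard_congr (fun v hv => ⟨symmDiff d.1 {v}, hv⟩) (fun v _ => ?_) (fun v w _ _ h => ?_)
    (fun e he => ?_)
  · change (symmDiff d.1 (symmDiff d.1 {v})).ncard = 1
    simp [symmDiff_symmDiff_cancel_left]
  · simpa using congrArg (fun e : {D : Set V // IsDomSet G D} => symmDiff d.1 e.1) h
  · obtain ⟨v, hv⟩ := ncard_eq_one.mp (show (symmDiff d.1 e.1).ncard = 1 from he)
    have he : e.1 = symmDiff d.1 {v} := by rw [← hv, symmDiff_symmDiff_cancel_left]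
    exact ⟨v, show IsDomSet G _ from he ▸ e.2, Subtype.ext he.symm⟩

lemma ncard_neighborSet_domGraph_add_ncard_criticalSet [Finite V]
    (d : {D : Set V // IsDomSet G D}) :
    ((DomGraph G).neighborSet d).ncard + (criticalSet G d.1).ncard = Nat.card V := by
  have : {v | IsDomSet G (symmDiff d.1 {v})} = (criticalSet G d.1)ᶜ := by
    ext v; exact isDomSet_symmDiff_singleton_iff d.2
  rw [ncard_neighborSet_domGraph, this, add_comm, ncard_add_ncard_compl]

lemma criticalSet_univ (hG : ∀ v, ∃ u, G.Adj v u) : criticalSet G univ = ∅ := by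
  refine eq_empty_of_forall_notMem fun v ⟨_, hv⟩ => hv fun z hz => ?_
  obtain rfl : z = v := by simpa using hz
  obtain ⟨u, hu⟩ := hG z
  exact ⟨u, by simpa using hu.ne', hu.symm⟩

section MinimalDomination

variable [Finite V] {ℓ : ℕ}

lemma eq_compl_closedNeighborSet_of_not_isDomSet
    (h3 : ∀ S : Set V, S.ncard = ℓ + 1 → IsDomSet G S) {B : Set V} (hB : B.ncard = ℓ)
    (hB' : ¬ IsDomSet G B) : ∃ u, B = (G.closedNeighborSet u)ᶜ := by
  obtain ⟨u, hBu⟩ := not_isDomSet_iff.mp hB'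
  refine ⟨u, eq_of_subset_of_ncard_le hBu ?_⟩
  by_contra! hlt
  obtain ⟨T, hTu, hT⟩ := exists_subset_card_eq (show ℓ + 1 ≤ _ from hB ▸ hlt)
  exact not_isDomSet_iff.mpr ⟨u, hTu⟩ (h3 T hT)

lemma exists_closedNeighborSet_eq_insert_diff
    (h3 : ∀ S : Set V, S.ncard = ℓ + 1 → IsDomSet G S)
    (heven : ∀ D : Set V, D.ncard = ℓ + 1 → Even (criticalSet G D).ncard)
    {w : V} (hw : (G.closedNeighborSet w)ᶜ.ncard = ℓ) {x : V}
    (hx : x ∈ G.closedNeighborSet w) :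
    ∃ y ∉ G.closedNeighborSet w, ∃ u,
      G.closedNeighborSet u = insert y (G.closedNeighborSet w \ {x}) := by
  have hxB : x ∉ (G.closedNeighborSet w)ᶜ := not_not.mpr hx
  have hD : (insert x (G.closedNeighborSet w)ᶜ).ncard = ℓ + 1 := by
    rw [ncard_insert_of_notMem hxB, hw]
  have hx_crit : x ∈ criticalSet G (insert x (G.closedNeighborSet w)ᶜ) := by
    refine ⟨mem_insert _ _, ?_⟩
    rw [insert_sdiff_self_of_notMem hxB]
    exact not_isDomSet_iff.mpr ⟨w, subset_rfl⟩
  obtain ⟨y, ⟨hyD, hy_crit⟩, hyx⟩ := exists_ne_of_one_lt_ncard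
    (one_lt_ncard_of_nonempty_of_even (toFinite _) ⟨x, hx_crit⟩ (heven _ hD)) x
  obtain ⟨u, hu⟩ := eq_compl_closedNeighborSet_of_not_isDomSet h3
    (by rw [ncard_sdiff_singleton_of_mem hyD, hD]; rfl) hy_crit
  refine ⟨y, (mem_insert_iff.mp hyD).resolve_left hyx, u, ?_⟩
  rw [← compl_compl (G.closedNeighborSet u), ← hu]
  ext z
  simp only [mem_compl_iff, mem_sdiff, mem_insert_iff, mem_singleton_iff]
  grind

lemma exists_neighborSet_eq
    (h3 : ∀ S : Set V, S.ncard = ℓ + 1 → IsDomSet G S)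
    (heven : ∀ D : Set V, D.ncard = ℓ + 1 → Even (criticalSet G D).ncard)
    {w : V} (hw : (G.closedNeighborSet w)ᶜ.ncard = ℓ) :
    ∃ b ∉ G.closedNeighborSet w, G.neighborSet b = G.neighborSet w := by
  obtain ⟨b, hb, u, hu⟩ :=
    exists_closedNeighborSet_eq_insert_diff h3 heven hw (G.self_mem_closedNeighborSet w)
  have hbw : b ≠ w := fun h => hb (h ▸ G.self_mem_closedNeighborSet w)
  have hmem {z : V} :
      z ∈ G.closedNeighborSet u ↔ z = b ∨ (z = w ∨ G.Adj w z) ∧ z ≠ w := by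
    rw [hu]; rfl
  obtain rfl : u = b := by
    by_contra hub
    obtain ⟨huw | hwu, huw'⟩ := (hmem.mp (G.self_mem_closedNeighborSet u)).resolve_left hub
    · exact huw' huw
    · rcases hmem.mp (Or.inr hwu.symm) with h | ⟨-, hww⟩
      · exact hbw h.symm
      · exact hww rfl
  refine ⟨u, hb, Set.ext fun z => ?_⟩
  have hwu : ¬ G.Adj w u := fun h => hb (Or.inr h)
  have := @hmem z
  simp only [mem_neighborSet, mem_closedNeighborSet] at this ⊢
  grind [Adj.ne, Adj.symm]

lemma exists_adj_closedNeighborSet_eq_insert_diff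
    (h3 : ∀ S : Set V, S.ncard = ℓ + 1 → IsDomSet G S)
    (heven : ∀ D : Set V, D.ncard = ℓ + 1 → Even (criticalSet G D).ncard)
    {w b : V} (hw : (G.closedNeighborSet w)ᶜ.ncard = ℓ) (hb : b ∉ G.closedNeighborSet w)
    (hbw : G.neighborSet b = G.neighborSet w) {x : V} (hx : G.Adj w x) :
    ∃ u, G.Adj w u ∧ G.closedNeighborSet u = insert b (G.closedNeighborSet w \ {x}) := by
  obtain ⟨y, hy, u, hu⟩ := exists_closedNeighborSet_eq_insert_diff h3 heven hw (Or.inr hx)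
  have hmem {z : V} :
      z ∈ G.closedNeighborSet u ↔ z = y ∨ (z = w ∨ G.Adj w z) ∧ z ≠ x := by
    rw [hu]; rfl
  have hyx : y ≠ x := fun h => hy (h ▸ Or.inr hx)
  have hwu : G.Adj w u := by
    have hw_mem : w ∈ G.closedNeighborSet u := hmem.mpr (Or.inr ⟨Or.inl rfl, hx.ne⟩)
    have hx_mem : x ∉ G.closedNeighborSet u := fun h =>
      (hmem.mp h).elim hyx.symm fun h => h.2 rfl
    rcases hw_mem with rfl | h
    · exact absurd (Or.inr hx) hx_mem
    · exact h.symm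
  have hbu : G.Adj u b := by
    rw [← mem_neighborSet, ← hbw] at hwu
    exact hwu.symm
  obtain rfl : b = y := by
    rcases hmem.mp (Or.inr hbu) with h | ⟨h, -⟩
    · exact h
    · exact absurd h hb
  exact ⟨u, hwu, hu⟩

lemma exists_closedNeighborSet_eq_insert_diff_of_adj
    (h3 : ∀ S : Set V, S.ncard = ℓ + 1 → IsDomSet G S)
    (heven : ∀ D : Set V, D.ncard = ℓ + 1 → Even (criticalSet G D).ncard)
    {w b : V} (hw : (G.closedNeighborSet w)ᶜ.ncard = ℓ) (hb : b ∉ G.closedNeighborSet w)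
    (hbw : G.neighborSet b = G.neighborSet w) {u : V} (hu : G.Adj w u) :
    ∃ x, G.Adj w x ∧ G.closedNeighborSet u = insert b (G.closedNeighborSet w \ {x}) := by
  choose! f hf using fun x (hx : G.Adj w x) =>
    exists_adj_closedNeighborSet_eq_insert_diff h3 heven hw hb hbw hx
  have hinj : InjOn f (G.neighborSet w) := by
    intro x hx x' hx' h
    by_contra hne
    have hx_mem : x ∈ G.closedNeighborSet (f x') := by
      rw [(hf x' hx').2]
      exact Or.inr ⟨Or.inr hx, hne⟩
    rw [← h, (hf x hx).2] at hx_mem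
    rcases hx_mem with rfl | ⟨-, hxx⟩
    · exact hb (Or.inr hx)
    · exact hxx rfl
  obtain ⟨x, hx, rfl⟩ := ((toFinite _).injOn_iff_bijOn_of_mapsTo
    (fun x hx => (hf x hx).1)).mp hinj |>.surjOn hu
  exact ⟨x, hx, (hf x hx).2⟩

lemma insert_closedNeighborSet_eq_univ (hG : G.Preconnected)
    (h3 : ∀ S : Set V, S.ncard = ℓ + 1 → IsDomSet G S)
    (heven : ∀ D : Set V, D.ncard = ℓ + 1 → Even (criticalSet G D).ncard)
    {w b : V} (hw : (G.closedNeighborSet w)ᶜ.ncard = ℓ) (hb : b ∉ G.closedNeighborSet w)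
    (hbw : G.neighborSet b = G.neighborSet w) :
    insert b (G.closedNeighborSet w) = univ := by
  refine hG.eq_univ_of_adj_mem (fun a ha c hac => ?_) (mem_insert b _)
  rcases ha with rfl | rfl | hwa
  · rw [← mem_neighborSet, hbw] at hac
    exact Or.inr (Or.inr hac)
  · exact Or.inr (Or.inr hac)
  · obtain ⟨x, -, hx⟩ :=
      exists_closedNeighborSet_eq_insert_diff_of_adj h3 heven hw hb hbw hwa
    have hc : c ∈ G.closedNeighborSet a := Or.inr hac
    rw [hx] at hc
    exact insert_subset_insert sdiff_subset hc

lemma closedNeighborSet_ne_univ (hG : G.Preconnected)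
    (h3 : ∀ S : Set V, S.ncard = ℓ + 1 → IsDomSet G S)
    (heven : ∀ D : Set V, D.ncard = ℓ + 1 → Even (criticalSet G D).ncard)
    {w b : V} (hw : (G.closedNeighborSet w)ᶜ.ncard = ℓ) (hb : b ∉ G.closedNeighborSet w)
    (hbw : G.neighborSet b = G.neighborSet w) (v : V) :
    G.closedNeighborSet v ≠ univ := by
  rw [Ne, eq_univ_iff_forall, not_forall]
  have hv := insert_closedNeighborSet_eq_univ hG h3 heven hw hb hbw ▸ mem_univ v
  rcases hv with rfl | rfl | hwv
  · refine ⟨w, ?_⟩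
    rintro (rfl | hvw)
    · exact hb (G.self_mem_closedNeighborSet _)
    · rw [hbw] at hvw
      exact G.loopless.irrefl w hvw
  · exact ⟨b, hb⟩
  · obtain ⟨x, hwx, hv⟩ :=
      exists_closedNeighborSet_eq_insert_diff_of_adj h3 heven hw hb hbw hwv
    refine ⟨x, ?_⟩
    rw [hv]
    rintro (rfl | ⟨-, hxx⟩)
    · exact hb (Or.inr hwx)
    · exact hxx rfl

lemma exists_odd_ncard_criticalSet (hG : G.Preconnected)
    (h1 : ∃ S : Set V, S.ncard = ℓ ∧ IsDomSet G S)
    (h2 : ∃ S : Set V, S.ncard = ℓ ∧ ¬ IsDomSet G S)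
    (h3 : ∀ S : Set V, S.ncard = ℓ + 1 → IsDomSet G S) :
    ∃ D : Set V, D.ncard = ℓ + 1 ∧ Odd (criticalSet G D).ncard := by
  by_contra! hodd
  have heven (D : Set V) (hD : D.ncard = ℓ + 1) : Even (criticalSet G D).ncard :=
    Nat.not_odd_iff_even.mp (hodd D hD)
  obtain ⟨B, hB, hBnd⟩ := h2
  obtain ⟨w, rfl⟩ := eq_compl_closedNeighborSet_of_not_isDomSet h3 hB hBnd
  obtain ⟨b, hb, hbw⟩ := exists_neighborSet_eq h3 heven hB
  have hcompl : (G.closedNeighborSet w)ᶜ = {b} := by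
    refine Set.ext fun z => ⟨fun hz => ?_, fun hz => hz ▸ hb⟩
    have hz' := insert_closedNeighborSet_eq_univ hG h3 heven hB hb hbw ▸ mem_univ z
    exact (mem_insert_iff.mp hz').resolve_right hz
  have hℓ : ℓ = 1 := by rw [← hB, hcompl, ncard_singleton]
  obtain ⟨S, hS, hSdom⟩ := h1
  obtain ⟨s, rfl⟩ := ncard_eq_one.mp (hℓ ▸ hS)
  exact closedNeighborSet_ne_univ hG h3 heven hB hb hbw s (isDomSet_singleton_iff.mp hSdom)

end MinimalDomination

end

theorem domGraph_even_and_odd_degree_general {V : Type*} [Fintype V] (G : SimpleGraph V)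
    (hconn : G.Connected) (hn : 2 ≤ Fintype.card V)
    (ℓ : ℕ)
    (h1 : ∃ S : Set V, S.ncard = ℓ ∧ IsDomSet G S)
    (h2 : ∃ S : Set V, S.ncard = ℓ ∧ ¬ IsDomSet G S)
    (h3 : ∀ S : Set V, S.ncard = ℓ + 1 → IsDomSet G S) :
    (∃ d : {D : Set V // IsDomSet G D}, Even ((DomGraph G).neighborSet d).ncard) ∧
    (∃ d : {D : Set V // IsDomSet G D}, Odd ((DomGraph G).neighborSet d).ncard) := by
  have : Nontrivial V := Fintype.one_lt_card_iff_nontrivial.mp hn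
  obtain ⟨D, hD, hodd⟩ := exists_odd_ncard_criticalSet hconn.preconnected h1 h2 h3
  let univDom : {D : Set V // IsDomSet G D} := ⟨univ, fun v hv => absurd (mem_univ v) hv⟩
  have hdeg_univ := ncard_neighborSet_domGraph_add_ncard_criticalSet univDom
  rw [criticalSet_univ hconn.preconnected.exists_adj_of_nontrivial, ncard_empty,
    add_zero] at hdeg_univ
  have hdeg_D := ncard_neighborSet_domGraph_add_ncard_criticalSet ⟨D, h3 D hD⟩
  have hparity :
      Even ((DomGraph G).neighborSet ⟨D, h3 D hD⟩).ncard ↔ ¬ Even (Nat.card V) := by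
    rw [← hdeg_D, Nat.even_add, ← Nat.not_odd_iff_even (n := (criticalSet G D).ncard)]
    tauto
  by_cases hev : Even (Nat.card V)
  · exact ⟨⟨univDom, hdeg_univ ▸ hev⟩,
      ⟨_, Nat.not_even_iff_odd.mp (hparity.not.mpr (not_not.mpr hev))⟩⟩
  · exact ⟨⟨_, hparity.mpr hev⟩, ⟨univDom, hdeg_univ ▸ Nat.not_even_iff_odd.mp hev⟩⟩

/-- If some set of `ℓ` vertices dominates `G`, some set of `ℓ` vertices does not dominate
`G`, and every set of `ℓ + 1` vertices dominates `G`, then the dominating graph of the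
connected graph `G` has a vertex of even degree and a vertex of odd degree. -/
theorem domGraph_even_and_odd_degree {V : Type*} [Fintype V] (G : SimpleGraph V)
    (hconn : G.Connected) (hn : 2 ≤ Fintype.card V)
    (ℓ : ℕ) (hℓ1 : 1 ≤ ℓ) (hℓ2 : ℓ ≤ Fintype.card V - 1)
    (h1 : ∃ S : Set V, S.ncard = ℓ ∧ IsDomSet G S)
    (h2 : ∃ S : Set V, S.ncard = ℓ ∧ ¬ IsDomSet G S)
    (h3 : ∀ S : Set V, S.ncard = ℓ + 1 → IsDomSet G S) :
    (∃ d : {D : Set V // IsDomSet G D}, Even ((DomGraph G).neighborSet d).ncard) ∧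
    (∃ d : {D : Set V // IsDomSet G D}, Odd ((DomGraph G).neighborSet d).ncard) :=
  domGraph_even_and_odd_degree_general G hconn hn ℓ h1 h2 h3
end

section
/- Let n and k be integers with n ≥ 3 and ⌈n/3⌉ < k < n, and let P_n denote the path on n vertices. Then the k-dominating graph D_k(P_n) is Eulerian if and only if n = 4 and k = 3. -/
open SimpleGraph

/-!
The neighbours of a dominating set `A` in `D_k(G)` are sets `A ∆ {v}`: adding `v ∉ A` is
possible iff `|A| < k`, removing `v ∈ A` iff `v` is redundant (`A \ {v}` still dominates). Hence
`deg A = [|A| < k] (|V| - |A|) + #(redundant vertices of A)`.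

For `P_n` with `⌈n/3⌉ < k`, a residue class mod 3, possibly with one extra vertex, gives a
dominating set of odd degree for a suitable choice depending on `n mod 3` and on whether
`k = ⌈n/3⌉ + 1`: either it has size `< k` and `n - |A| + #redundant` is odd, or it has size
exactly `k` and a single redundant vertex. The exception `D_3(P_4)` is an 8-cycle.
-/

section KDomGraph

variable {V : Type*} {G : SimpleGraph V} {k : ℕ}

def redundantVerts (G : SimpleGraph V) (A : Set V) : Set V :=
  {v ∈ A | IsDomSet G (A \ {v})}

lemma IsDomSet.mono_s9 {A B : Set V} (hA : IsDomSet G A) (hAB : A ⊆ B) : IsDomSet G B := by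
  intro v hv
  obtain ⟨u, hu, huv⟩ := hA v fun h => hv (hAB h)
  exact ⟨u, hAB hu, huv⟩

lemma symmDiff_singleton_of_mem {A : Set V} {v : V} (hv : v ∈ A) :
    symmDiff A {v} = A \ {v} := by
  ext w
  simp only [Set.mem_symmDiff, Set.mem_singleton_iff, Set.mem_sdiff]
  by_cases hw : w = v <;> simp_all

lemma symmDiff_singleton_of_notMem {A : Set V} {v : V} (hv : v ∉ A) :
    symmDiff A {v} = insert v A := by
  ext w
  simp only [Set.mem_symmDiff, Set.mem_singleton_iff, Set.mem_insert_iff]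
  by_cases hw : w = v <;> simp_all

lemma kDomGraph_adj_iff {A B : {D : Set V // IsDomSet G D ∧ D.ncard ≤ k}} :
    (KDomGraph G k).Adj A B ↔ ∃ v, B.1 = symmDiff A.1 {v} := by
  change (symmDiff A.1 B.1).ncard = 1 ↔ _
  rw [Set.ncard_eq_one]
  refine exists_congr fun v => ⟨fun h => ?_, fun h => ?_⟩
  · rw [← h, symmDiff_symmDiff_cancel_left]
  · rw [h, symmDiff_symmDiff_cancel_left]

lemma ncard_neighborSet_kDomGraph_eq (A : {D : Set V // IsDomSet G D ∧ D.ncard ≤ k}) :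
    ((KDomGraph G k).neighborSet A).ncard =
      {v | IsDomSet G (symmDiff A.1 {v}) ∧ (symmDiff A.1 {v}).ncard ≤ k}.ncard := by
  have hinj : Function.Injective fun v : V => symmDiff A.1 {v} := fun v w h => by
    simpa using congrArg (symmDiff A.1) h
  rw [← Set.ncard_image_of_injective _ Subtype.val_injective,
    ← Set.ncard_image_of_injective _ hinj]
  congr 1
  ext B
  simp only [Set.mem_image, mem_neighborSet, kDomGraph_adj_iff, Set.mem_ofPred_eq]
  constructor
  · rintro ⟨B, ⟨v, hv⟩, rfl⟩
    exact ⟨v, hv ▸ B.2, hv.symm⟩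
  · rintro ⟨v, hv, rfl⟩
    exact ⟨⟨_, hv⟩, ⟨v, rfl⟩, rfl⟩

lemma ncard_neighborSet_kDomGraph [Finite V] (A : {D : Set V // IsDomSet G D ∧ D.ncard ≤ k}) :
    ((KDomGraph G k).neighborSet A).ncard =
      (if A.1.ncard < k then Nat.card V - A.1.ncard else 0) + (redundantVerts G A.1).ncard := by
  obtain ⟨A, hdom, hk⟩ := A
  have htoggle : {v | IsDomSet G (symmDiff A {v}) ∧ (symmDiff A {v}).ncard ≤ k} =
      {v | v ∉ A ∧ A.ncard < k} ∪ redundantVerts G A := by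
    ext v
    by_cases hv : v ∈ A
    · simp [symmDiff_singleton_of_mem hv, redundantVerts, hv, Nat.le_succ_of_le hk]
    · simp [symmDiff_singleton_of_notMem hv, Set.ncard_insert_of_notMem hv, redundantVerts, hv,
        hdom.mono_s9 (Set.subset_insert v A)]
  have hdisj : Disjoint {v | v ∉ A ∧ A.ncard < k} (redundantVerts G A) :=
    Set.disjoint_left.2 fun v hv hv' => hv.1 hv'.1
  rw [ncard_neighborSet_kDomGraph_eq, htoggle, Set.ncard_union_eq hdisj]
  split_ifs with h
  · simp only [h, and_true]
    exact congrArg (· + _) (Set.ncard_compl A)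
  · simp [h]

lemma kDomGraph_reachable_of_subset [Finite V] {A B : {D : Set V // IsDomSet G D ∧ D.ncard ≤ k}}
    (hAB : A.1 ⊆ B.1) : (KDomGraph G k).Reachable A B := by
  obtain ⟨A, hA, hAk⟩ := A
  induction hd : (B.1 \ A).ncard generalizing A with
  | zero =>
    have hBA : B.1 ⊆ A := Set.sdiff_eq_empty.1 ((Set.ncard_eq_zero (Set.toFinite _)).1 hd)
    obtain rfl : B = ⟨A, hA, hAk⟩ := Subtype.ext (hBA.antisymm hAB)
    rfl
  | succ d ih =>
    obtain ⟨x, hxB, hxA⟩ : ∃ x ∈ B.1, x ∉ A :=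
      Set.nonempty_of_ncard_ne_zero (hd ▸ d.succ_ne_zero)
    have hxAB : insert x A ⊆ B.1 := Set.insert_subset hxB hAB
    let A' : {D : Set V // IsDomSet G D ∧ D.ncard ≤ k} :=
      ⟨insert x A, hA.mono_s9 (Set.subset_insert x A), (Set.ncard_le_ncard hxAB).trans B.2.2⟩
    have hadj : (KDomGraph G k).Adj ⟨A, hA, hAk⟩ A' :=
      kDomGraph_adj_iff.2 ⟨x, (symmDiff_singleton_of_notMem hxA).symm⟩
    refine hadj.reachable.trans (ih _ A'.2.1 A'.2.2 hxAB ?_)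
    change (B.1 \ insert x A).ncard = d
    rw [Set.insert_eq, Set.union_comm, ← Set.sdiff_sdiff,
      Set.ncard_sdiff_singleton_of_mem ((Set.mem_sdiff x).2 ⟨hxB, hxA⟩), hd, Nat.add_sub_cancel]

lemma kDomGraph_reachable_of_ncard_union_le [Finite V]
    {A B : {D : Set V // IsDomSet G D ∧ D.ncard ≤ k}} (h : (A.1 ∪ B.1).ncard ≤ k) :
    (KDomGraph G k).Reachable A B :=
  let C : {D : Set V // IsDomSet G D ∧ D.ncard ≤ k} :=
    ⟨A.1 ∪ B.1, A.2.1.mono_s9 Set.subset_union_left, h⟩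
  (kDomGraph_reachable_of_subset (B := C) Set.subset_union_left).trans
    (kDomGraph_reachable_of_subset (B := C) Set.subset_union_right).symm

end KDomGraph

section PathGraph

instance (n : ℕ) : DecidableRel (pathGraph n).Adj := fun _ _ => decidable_of_iff' _ pathGraph_adj

variable {n : ℕ}

lemma isDomSet_pathGraph_setOf_iff {p : ℕ → Prop} :
    IsDomSet (pathGraph n) {v : Fin n | p v} ↔
      ∀ j < n, ¬ p j → (j + 1 < n ∧ p (j + 1)) ∨ (0 < j ∧ p (j - 1)) := by
  constructor
  · intro h j hj hpj
    obtain ⟨u, hu, hadj⟩ := h ⟨j, hj⟩ hpj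
    have hadj' := pathGraph_adj.1 hadj
    simp only at hadj'
    rcases hadj' with huj | hju
    · have hu' : (u : ℕ) = j - 1 := by omega
      exact Or.inr ⟨by omega, hu' ▸ hu⟩
    · exact Or.inl ⟨hju ▸ u.2, hju ▸ hu⟩
  · intro h v hv
    rcases h v v.2 hv with ⟨hlt, hp⟩ | ⟨hpos, hp⟩
    · exact ⟨⟨v + 1, hlt⟩, hp, pathGraph_adj.2 (Or.inr rfl)⟩
    · exact ⟨⟨v - 1, by omega⟩, hp, pathGraph_adj.2 (Or.inl (by simp only; omega))⟩

lemma mem_redundantVerts_pathGraph_setOf_iff (p : ℕ → Prop) {v : Fin n} :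
    v ∈ redundantVerts (pathGraph n) {u : Fin n | p u} ↔
      p v ∧ ∀ j < n, ¬ (p j ∧ j ≠ v) →
        (j + 1 < n ∧ p (j + 1) ∧ j + 1 ≠ v) ∨ (0 < j ∧ p (j - 1) ∧ j - 1 ≠ v) := by
  have hdiff : {u : Fin n | p u} \ {v} = {u : Fin n | p u ∧ (u : ℕ) ≠ v} := by
    ext u
    simp [Fin.ext_iff]
  rw [redundantVerts, Set.mem_sep_iff, hdiff,
    isDomSet_pathGraph_setOf_iff (p := fun j => p j ∧ j ≠ v)]
  rfl

lemma ncard_setOf_fin_eq_count (p : ℕ → Prop) [DecidablePred p] :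
    {v : Fin n | p v}.ncard = Nat.count p n := by
  rw [Nat.count_eq_card_filter_range, ← Set.ncard_coe_finset,
    ← Set.ncard_image_of_injective _ Fin.val_injective]
  congr 1
  ext j
  simp only [Set.mem_image, Set.mem_ofPred_eq, Finset.coe_filter, Finset.mem_range]
  exact ⟨fun ⟨v, hv, hvj⟩ => hvj ▸ ⟨v.2, hv⟩,
    fun ⟨hj, hp⟩ => ⟨⟨j, hj⟩, hp, rfl⟩⟩

lemma count_eq_or {p : ℕ → Prop} [DecidablePred p] {x : ℕ} (hpx : ¬ p x) (N : ℕ) :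
    Nat.count (fun j => j = x ∨ p j) N = Nat.count p N + if x < N then 1 else 0 := by
  induction N with
  | zero => simp
  | succ N ih =>
    rw [Nat.count_succ, Nat.count_succ, ih]
    by_cases hNx : N = x
    · subst hNx
      simp [hpx]
    · simp only [hNx, false_or]
      split_ifs <;> omega

lemma count_mod_three_eq {r : ℕ} (hr : r < 3) (N : ℕ) :
    Nat.count (· % 3 = r) N = (N + 2 - r) / 3 := by
  induction N with
  | zero => simp only [Nat.count_zero]; omega
  | succ N ih => rw [Nat.count_succ, ih]; split_ifs <;> omega

end PathGraph

lemma exists_odd_degree_kDomGraph_pathGraph_of {n k c : ℕ} (p : ℕ → Prop) [DecidablePred p]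
    (hdom : ∀ j < n, ¬ p j → (j + 1 < n ∧ p (j + 1)) ∨ (0 < j ∧ p (j - 1)))
    (hcard : Nat.count p n = c) (hck : c ≤ k) (R : Set (Fin n))
    (hred : redundantVerts (pathGraph n) {v : Fin n | p v} = R)
    (hodd : Odd ((if c < k then n - c else 0) + R.ncard)) :
    ∃ A, Odd ((KDomGraph (pathGraph n) k).neighborSet A).ncard := by
  have hA : {v : Fin n | p v}.ncard = c := (ncard_setOf_fin_eq_count p).trans hcard
  refine ⟨⟨_, isDomSet_pathGraph_setOf_iff.2 hdom, hA.trans_le hck⟩, ?_⟩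
  rwa [ncard_neighborSet_kDomGraph, Nat.card_fin, hred, hA]

lemma exists_odd_degree_kDomGraph_pathGraph_three_mul_add_two {m k : ℕ} (hk : m + 1 < k) :
    ∃ A, Odd ((KDomGraph (pathGraph (3 * m + 2)) k).neighborSet A).ncard := by
  refine exists_odd_degree_kDomGraph_pathGraph_of (fun j => j % 3 = 1) (fun j _ => by omega)
    (count_mod_three_eq (by norm_num) _) (by omega) ∅ ?_ ?_
  · refine Set.eq_empty_of_forall_notMem fun v hv => ?_
    obtain ⟨hpv, hdom⟩ := (mem_redundantVerts_pathGraph_setOf_iff (· % 3 = 1)).1 hv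
    have := hdom v v.2
    omega
  · rw [if_pos (by omega), Set.ncard_empty, Nat.odd_iff]
    omega

lemma exists_odd_degree_kDomGraph_pathGraph_three_mul_of_eq {m : ℕ} (hm : 1 ≤ m) :
    ∃ A, Odd ((KDomGraph (pathGraph (3 * m)) (m + 1)).neighborSet A).ncard := by
  refine exists_odd_degree_kDomGraph_pathGraph_of (c := m + 1) (fun j => j = 0 ∨ j % 3 = 1)
    (fun j _ => by omega) ?_ le_rfl {⟨0, by omega⟩} ?_ ?_
  · rw [count_eq_or (by omega), count_mod_three_eq (by norm_num), if_pos (by omega)]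
    omega
  · ext v
    rw [mem_redundantVerts_pathGraph_setOf_iff (fun j => j = 0 ∨ j % 3 = 1)]
    simp only [Set.mem_singleton_iff, Fin.ext_iff]
    constructor
    · rintro ⟨hpv, hdom⟩
      by_contra hv0
      have := hdom (v + 1) (by omega)
      omega
    · intro hv0
      exact ⟨by omega, fun j _ => by omega⟩
  · rw [if_neg (lt_irrefl _), Set.ncard_singleton]
    exact odd_one

lemma exists_odd_degree_kDomGraph_pathGraph_three_mul_of_lt {m k : ℕ} (hm : 1 ≤ m)
    (hk : m + 1 < k) :
    ∃ A, Odd ((KDomGraph (pathGraph (3 * m)) k).neighborSet A).ncard := by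
  refine exists_odd_degree_kDomGraph_pathGraph_of (c := m + 1)
    (fun j => j = 3 * m - 1 ∨ j % 3 = 0) (fun j _ => by omega) ?_ hk.le ∅ ?_ ?_
  · rw [count_eq_or (by omega), count_mod_three_eq (by norm_num), if_pos (by omega)]
    omega
  · refine Set.eq_empty_of_forall_notMem fun v hv => ?_
    obtain ⟨hpv, hdom⟩ :=
      (mem_redundantVerts_pathGraph_setOf_iff (fun j => j = 3 * m - 1 ∨ j % 3 = 0)).1 hv
    have := hdom v v.2
    omega
  · rw [if_pos hk, Set.ncard_empty, Nat.odd_iff]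
    omega

lemma exists_odd_degree_kDomGraph_pathGraph_three_mul_add_one_of_eq {m : ℕ} (hm : 2 ≤ m) :
    ∃ A, Odd ((KDomGraph (pathGraph (3 * m + 1)) (m + 2)).neighborSet A).ncard := by
  refine exists_odd_degree_kDomGraph_pathGraph_of (c := m + 2) (fun j => j = 4 ∨ j % 3 = 0)
    (fun j _ => by omega) ?_ le_rfl {⟨4, by omega⟩} ?_ ?_
  · rw [count_eq_or (by omega), count_mod_three_eq (by norm_num), if_pos (by omega)]
    omega
  · ext v
    rw [mem_redundantVerts_pathGraph_setOf_iff (fun j => j = 4 ∨ j % 3 = 0)]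
    simp only [Set.mem_singleton_iff, Fin.ext_iff]
    constructor
    · rintro ⟨hpv, hdom⟩
      by_contra hv4
      by_cases hv3 : (v : ℕ) = 3
      -- `3` is dominated by `4`, but `2` loses its only neighbour in the set
      · have := hdom 2 (by omega)
        omega
      · have := hdom v v.2
        omega
    · intro hv4
      exact ⟨by omega, fun j _ => by omega⟩
  · rw [if_neg (lt_irrefl _), Set.ncard_singleton]
    exact odd_one

lemma exists_odd_degree_kDomGraph_pathGraph_three_mul_add_one_of_lt {m k : ℕ} (hm : 1 ≤ m)
    (hk : m + 2 < k) :
    ∃ A, Odd ((KDomGraph (pathGraph (3 * m + 1)) k).neighborSet A).ncard := by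
  refine exists_odd_degree_kDomGraph_pathGraph_of (c := m + 2) (fun j => j = 1 ∨ j % 3 = 0)
    (fun j _ => by omega) ?_ hk.le {⟨0, by omega⟩, ⟨1, by omega⟩} ?_ ?_
  · rw [count_eq_or (by omega), count_mod_three_eq (by norm_num), if_pos (by omega)]
    omega
  · ext v
    rw [mem_redundantVerts_pathGraph_setOf_iff (fun j => j = 1 ∨ j % 3 = 0)]
    simp only [Set.mem_insert_iff, Set.mem_singleton_iff, Fin.ext_iff]
    constructor
    · rintro ⟨hpv, hdom⟩
      by_contra hv01
      have := hdom v v.2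
      omega
    · intro hv01
      exact ⟨by omega, fun j _ => by omega⟩
  · rw [if_pos hk, Set.ncard_pair (by simp), Nat.odd_iff]
    omega

lemma exists_odd_degree_kDomGraph_pathGraph {n k : ℕ} (hn : 3 ≤ n) (hk : (n + 2) / 3 < k)
    (hnk : ¬ (n = 4 ∧ k = 3)) :
    ∃ A, Odd ((KDomGraph (pathGraph n) k).neighborSet A).ncard := by
  obtain ⟨m, rfl | rfl | rfl⟩ : ∃ m, n = 3 * m ∨ n = 3 * m + 1 ∨ n = 3 * m + 2 :=
    ⟨n / 3, by omega⟩
  · obtain rfl | hk := (by omega : k = m + 1 ∨ m + 1 < k)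
    · exact exists_odd_degree_kDomGraph_pathGraph_three_mul_of_eq (by omega)
    · exact exists_odd_degree_kDomGraph_pathGraph_three_mul_of_lt (by omega) hk
  · obtain rfl | hk := (by omega : k = m + 2 ∨ m + 2 < k)
    · exact exists_odd_degree_kDomGraph_pathGraph_three_mul_add_one_of_eq (by omega)
    · exact exists_odd_degree_kDomGraph_pathGraph_three_mul_add_one_of_lt (by omega) hk
  · exact exists_odd_degree_kDomGraph_pathGraph_three_mul_add_two (by omega)

section Fintype

variable {V : Type*} [Fintype V] [DecidableEq V] {G : SimpleGraph V} [DecidableRel G.Adj] {k : ℕ}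

instance (s : Finset V) : Decidable (IsDomSet G ↑s) :=
  decidable_of_iff (∀ v ∉ s, ∃ u ∈ s, G.Adj u v) (by simp [IsDomSet])

lemma ncard_neighborSet_kDomGraph_coe (s : Finset V)
    (hs : IsDomSet G ↑s ∧ (↑s : Set V).ncard ≤ k) :
    ((KDomGraph G k).neighborSet ⟨↑s, hs⟩).ncard =
      (Finset.univ.filter fun v =>
        IsDomSet G ↑(symmDiff s {v}) ∧ (symmDiff s {v}).card ≤ k).card := by
  rw [ncard_neighborSet_kDomGraph_eq, ← Set.ncard_coe_finset]
  congr 1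
  ext v
  have hv : symmDiff (↑s : Set V) {v} = ↑(symmDiff s {v}) := by
    rw [Finset.coe_symmDiff, Finset.coe_singleton]
  simp only [Finset.coe_filter, Finset.mem_univ, true_and, Set.mem_ofPred_eq, hv,
    Set.ncard_coe_finset]

end Fintype

lemma ncard_neighborSet_kDomGraph_pathGraph_four
    (A : {D : Set (Fin 4) // IsDomSet (pathGraph 4) D ∧ D.ncard ≤ 3}) :
    ((KDomGraph (pathGraph 4) 3).neighborSet A).ncard = 2 := by
  have key : ∀ s : Finset (Fin 4), IsDomSet (pathGraph 4) ↑s → s.card ≤ 3 →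
      (Finset.univ.filter fun v =>
        IsDomSet (pathGraph 4) ↑(symmDiff s {v}) ∧ (symmDiff s {v}).card ≤ 3).card = 2 := by
    decide
  obtain ⟨A, hA⟩ := A
  obtain ⟨s, rfl⟩ : ∃ s : Finset (Fin 4), ↑s = A := ⟨A.toFinite.toFinset, by simp⟩
  rw [ncard_neighborSet_kDomGraph_coe]
  exact key s hA.1 (by simpa using hA.2)

lemma kDomGraph_pathGraph_four_reachable
    (A B : {D : Set (Fin 4) // IsDomSet (pathGraph 4) D ∧ D.ncard ≤ 3}) :
    (KDomGraph (pathGraph 4) 3).Reachable A B := by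
  let vertex (s : Finset (Fin 4)) (hs : IsDomSet (pathGraph 4) ↑s ∧ s.card ≤ 3) :
      {D : Set (Fin 4) // IsDomSet (pathGraph 4) D ∧ D.ncard ≤ 3} :=
    ⟨↑s, hs.1, by simpa using hs.2⟩
  have hunion : ∀ s t : Finset (Fin 4), (s ∪ t).card ≤ 3 →
      ((↑s : Set (Fin 4)) ∪ ↑t).ncard ≤ 3 := fun s t h => by
    rwa [← Finset.coe_union, Set.ncard_coe_finset]
  let H₀₂ := vertex {0, 2} (by decide)
  let H₁₃ := vertex {1, 3} (by decide)
  have h₁₃ : (KDomGraph (pathGraph 4) 3).Reachable H₁₃ H₀₂ :=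
    (kDomGraph_reachable_of_ncard_union_le (B := vertex {1, 2} (by decide))
      (hunion _ _ (by decide))).trans
      (kDomGraph_reachable_of_ncard_union_le (hunion _ _ (by decide)))
  suffices h : ∀ A, (KDomGraph (pathGraph 4) 3).Reachable A H₀₂ from (h A).trans (h B).symm
  intro A
  by_cases h : (1 : Fin 4) ∈ A.1 ∧ (3 : Fin 4) ∈ A.1
  · refine (kDomGraph_reachable_of_ncard_union_le (B := H₁₃) ?_).trans h₁₃
    rw [Set.union_eq_self_of_subset_right]
    · exact A.2.2
    · intro x hx
      simp only [H₁₃, vertex, Finset.coe_insert, Finset.coe_singleton, Set.mem_insert_iff,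
        Set.mem_singleton_iff] at hx
      rcases hx with rfl | rfl
      exacts [h.1, h.2]
  · refine kDomGraph_reachable_of_ncard_union_le (Nat.lt_succ_iff.1 ?_)
    convert Set.ncard_lt_card (s := A.1 ∪ ↑({0, 2} : Finset (Fin 4))) fun hA => h ?_
    · simp
    · have hmem : ∀ x, x ∈ A.1 ∪ ↑({0, 2} : Finset (Fin 4)) := fun x =>
        hA ▸ Set.mem_univ x
      exact ⟨by simpa using hmem 1, by simpa using hmem 3⟩

lemma isEulerian_kDomGraph_pathGraph_four : IsEulerian (KDomGraph (pathGraph 4) 3) :=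
  ⟨fun A => ncard_neighborSet_kDomGraph_pathGraph_four A ▸ even_two,
    fun u _ x _ _ _ => kDomGraph_pathGraph_four_reachable u x⟩

theorem kDomGraph_path_eulerian_iff_general (n k : ℕ) (hn : 3 ≤ n)
    (hk1 : (n + 2) / 3 < k) :
    IsEulerian (KDomGraph (SimpleGraph.pathGraph n) k) ↔ n = 4 ∧ k = 3 := by
  constructor
  · intro hE
    by_contra hnk
    obtain ⟨A, hA⟩ := exists_odd_degree_kDomGraph_pathGraph hn hk1 hnk
    exact Nat.not_even_iff_odd.2 hA (hE.1 A)
  · rintro ⟨rfl, rfl⟩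
    exact isEulerian_kDomGraph_pathGraph_four

/-- For `n ≥ 3` and `⌈n/3⌉ < k < n`, the `k`-dominating graph of the path `P_n` is
Eulerian iff `n = 4` and `k = 3`. -/
theorem kDomGraph_path_eulerian_iff (n k : ℕ) (hn : 3 ≤ n)
    (hk1 : (n + 2) / 3 < k) (hk2 : k < n) :
    IsEulerian (KDomGraph (SimpleGraph.pathGraph n) k) ↔ n = 4 ∧ k = 3 :=
  kDomGraph_path_eulerian_iff_general n k hn hk1
end

section
/- Let n and k be integers with n ≥ 2 and 1 < k ≤ n, and let K_{1,n} denote the star (the complete bipartite graph with parts of sizes 1 and n). Then the k-dominating graph D_k(K_{1,n}) is Eulerian if and only if n is even and k is odd. -/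
open SimpleGraph

/-!
In `K_{1,n}` a set is dominating iff it contains the centre `c` or is the set of all leaves, and
the latter has no neighbour in `D_k` because `k ≤ n`. A vertex `A ∋ c` cannot drop `c`, so its
neighbours come from toggling a leaf within the size bound: all `n` leaves when `|A| < k`, and the
`k - 1` leaves of `A` when `|A| = k`. Evaluating at `{c}` and at a `k`-set containing `c` forces
`n` and `k - 1` to be even; conversely every degree is then even, and every vertex containing `c`
reaches `{c}` by deleting leaves.
-/

theorem Set.symmDiff_singleton_of_mem {α : Type*} {s : Set α} {a : α} (h : a ∈ s) :
    symmDiff s {a} = s \ {a} :=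
  symmDiff_of_ge (Set.singleton_subset_iff.2 h)

theorem Set.symmDiff_singleton_of_notMem {α : Type*} {s : Set α} {a : α} (h : a ∉ s) :
    symmDiff s {a} = insert a s := by
  rw [(Set.disjoint_singleton_right.2 h).symmDiff_eq_sup]
  exact Set.union_singleton

section

variable {V : Type*} {G : SimpleGraph V} {k : ℕ}

theorem IsDomSet.mono_s12 {D D' : Set V} (hD : IsDomSet G D) (h : D ⊆ D') : IsDomSet G D' := by
  intro v hv
  obtain ⟨u, hu, huv⟩ := hD v fun hvD => hv (h hvD)
  exact ⟨u, h hu, huv⟩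

namespace KDomGraph

def toggles (G : SimpleGraph V) (k : ℕ) (A : Set V) : Set V :=
  {v | IsDomSet G (symmDiff A {v}) ∧ (symmDiff A {v}).ncard ≤ k}

variable {A B : {D : Set V // IsDomSet G D ∧ D.ncard ≤ k}}

theorem adj_iff_exists_eq_symmDiff :
    (KDomGraph G k).Adj A B ↔ ∃ v, B.1 = symmDiff A.1 {v} := by
  change (symmDiff A.1 B.1).ncard = 1 ↔ _
  rw [Set.ncard_eq_one]
  refine exists_congr fun v => ⟨fun h => ?_, fun h => ?_⟩
  · rw [← h, symmDiff_symmDiff_cancel_left]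
  · rw [h, symmDiff_symmDiff_cancel_left]

theorem toggles_nonempty_of_adj (h : (KDomGraph G k).Adj A B) : (toggles G k A.1).Nonempty := by
  obtain ⟨v, hv⟩ := adj_iff_exists_eq_symmDiff.1 h
  exact ⟨v, show IsDomSet G _ ∧ _ by rw [← hv]; exact B.2⟩

theorem ncard_neighborSet_eq_ncard_toggles :
    ((KDomGraph G k).neighborSet A).ncard = (toggles G k A.1).ncard := by
  symm
  refine Set.ncard_congr (fun v hv => ⟨symmDiff A.1 {v}, hv⟩)
    (fun v _ => adj_iff_exists_eq_symmDiff.2 ⟨v, rfl⟩) (fun v w _ _ h => ?_) (fun B hB => ?_)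
  · simpa using symmDiff_right_injective A.1 (congrArg Subtype.val h)
  · obtain ⟨v, hv⟩ := adj_iff_exists_eq_symmDiff.1 hB
    exact ⟨v, show IsDomSet G _ ∧ _ by rw [← hv]; exact B.2, Subtype.ext hv.symm⟩

/-- Every set between `B` and `A` is again a vertex, so deleting the elements of `A \ B` one at
a time gives a walk. -/
theorem reachable_of_subset (hA : A.1.Finite) (hBA : B.1 ⊆ A.1) :
    (KDomGraph G k).Reachable A B := by
  induction h : (A.1 \ B.1).ncard generalizing A with
  | zero =>
    have hAB : A.1 ⊆ B.1 := Set.sdiff_eq_empty.1 ((Set.ncard_eq_zero hA.sdiff).1 h)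
    rw [Subtype.ext (hAB.antisymm hBA)]
  | succ m ih =>
    obtain ⟨v, hvA, hvB⟩ : (A.1 \ B.1).Nonempty := Set.nonempty_of_ncard_ne_zero (by omega)
    have hBA' : B.1 ⊆ A.1 \ {v} := fun x hx => ⟨hBA hx, fun hxv => hvB (hxv ▸ hx)⟩
    let A' : {D : Set V // IsDomSet G D ∧ D.ncard ≤ k} :=
      ⟨A.1 \ {v}, B.2.1.mono_s12 hBA', (Set.ncard_sdiff_singleton_le _ _).trans A.2.2⟩
    have hadj : (KDomGraph G k).Adj A A' :=
      adj_iff_exists_eq_symmDiff.2 ⟨v, (Set.symmDiff_singleton_of_mem hvA).symm⟩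
    refine hadj.reachable.trans (ih hA.sdiff hBA' ?_)
    have hv : v ∈ A.1 \ B.1 := ⟨hvA, hvB⟩
    rw [Set.sdiff_sdiff_comm, Set.ncard_sdiff_singleton_of_mem hv, h, Nat.add_sub_cancel]

end KDomGraph

end

section Star

variable {n : ℕ} {D : Set (Fin 1 ⊕ Fin n)}

theorem isDomSet_star_of_center_mem (hc : Sum.inl 0 ∈ D) :
    IsDomSet (completeBipartiteGraph (Fin 1) (Fin n)) D := by
  rintro (i | i) hv
  · exact absurd (Subsingleton.elim i 0 ▸ hc) hv
  · exact ⟨_, hc, by simp⟩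

theorem IsDomSet.eq_compl_center_of_star
    (hD : IsDomSet (completeBipartiteGraph (Fin 1) (Fin n)) D) (hc : Sum.inl 0 ∉ D) :
    D = {Sum.inl 0}ᶜ := by
  ext v
  refine ⟨fun hv hvc => hc (hvc ▸ hv), fun hv => ?_⟩
  rcases v with i | i
  · simp [Subsingleton.elim i 0] at hv
  by_contra hi
  obtain ⟨j | j, hj, hadj⟩ := hD _ hi
  · exact hc (Subsingleton.elim j 0 ▸ hj)
  · simp at hadj

theorem ncard_compl_center : ({Sum.inl 0}ᶜ : Set (Fin 1 ⊕ Fin n)).ncard = n := by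
  rw [Set.ncard_compl, Set.ncard_singleton, Nat.card_sum]
  simp

variable {k : ℕ} {A : Set (Fin 1 ⊕ Fin n)}

theorem star_toggles_eq_empty (hk : k ≤ n)
    (hA : IsDomSet (completeBipartiteGraph (Fin 1) (Fin n)) A) (hc : Sum.inl 0 ∉ A) :
    KDomGraph.toggles (completeBipartiteGraph (Fin 1) (Fin n)) k A = ∅ := by
  obtain rfl := hA.eq_compl_center_of_star hc
  refine Set.eq_empty_of_forall_notMem fun v ⟨hdom, hcard⟩ => ?_
  by_cases hv : v = Sum.inl 0
  · subst hv
    rw [Set.symmDiff_singleton_of_notMem hc, Set.ncard_insert_of_notMem hc, ncard_compl_center]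
      at hcard
    omega
  · rw [Set.symmDiff_singleton_of_mem hv] at hdom
    have hv' : v ∈ ({Sum.inl 0}ᶜ : Set _) \ {v} := by
      rw [hdom.eq_compl_center_of_star (by simp)]
      exact hv
    exact hv'.2 rfl

theorem mem_star_toggles_iff (hk : k ≤ n) (hc : Sum.inl 0 ∈ A) (hA : A.ncard ≤ k)
    {v : Fin 1 ⊕ Fin n} :
    v ∈ KDomGraph.toggles (completeBipartiteGraph (Fin 1) (Fin n)) k A ↔
      v ≠ Sum.inl 0 ∧ (v ∈ A ∨ A.ncard < k) := by
  by_cases hv : v = Sum.inl 0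
  · subst hv
    simp only [ne_eq, not_true_eq_false, false_and, iff_false]
    rintro ⟨hdom, -⟩
    rw [Set.symmDiff_singleton_of_mem hc] at hdom
    have h := congrArg Set.ncard (hdom.eq_compl_center_of_star (by simp))
    rw [Set.ncard_sdiff_singleton_of_mem hc, ncard_compl_center] at h
    have := (Set.ncard_pos (s := A)).2 ⟨_, hc⟩
    omega
  by_cases hvA : v ∈ A
  · rw [KDomGraph.toggles, Set.mem_ofPred_eq, Set.symmDiff_singleton_of_mem hvA,
      Set.ncard_sdiff_singleton_of_mem hvA]
    exact iff_of_true ⟨isDomSet_star_of_center_mem ⟨hc, Ne.symm hv⟩, by omega⟩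
      ⟨hv, .inl hvA⟩
  · rw [KDomGraph.toggles, Set.mem_ofPred_eq, Set.symmDiff_singleton_of_notMem hvA,
      Set.ncard_insert_of_notMem hvA]
    simp [hv, hvA, isDomSet_star_of_center_mem (Set.mem_insert_of_mem _ hc)]

open Classical in
theorem ncard_neighborSet_kDomGraph_star (hk : k ≤ n)
    (A : {D : Set (Fin 1 ⊕ Fin n) // IsDomSet (completeBipartiteGraph (Fin 1) (Fin n)) D ∧
      D.ncard ≤ k}) :
    ((KDomGraph (completeBipartiteGraph (Fin 1) (Fin n)) k).neighborSet A).ncard =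
      if Sum.inl 0 ∈ A.1 then (if A.1.ncard < k then n else k - 1) else 0 := by
  rw [KDomGraph.ncard_neighborSet_eq_ncard_toggles]
  split_ifs with hc hlt
  · convert ncard_compl_center using 2
    ext v
    simp [mem_star_toggles_iff hk hc A.2.2, hlt]
  · have hAk : A.1.ncard = k := by have := A.2.2; omega
    have hT : KDomGraph.toggles (completeBipartiteGraph (Fin 1) (Fin n)) k A.1 =
        A.1 \ {Sum.inl 0} := by
      ext v
      simp [mem_star_toggles_iff hk hc A.2.2, hlt, and_comm]
    rw [hT, Set.ncard_sdiff_singleton_of_mem hc, hAk]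
  · rw [star_toggles_eq_empty hk A.2.1 hc, Set.ncard_empty]

theorem center_mem_of_adj_kDomGraph_star (hk : k ≤ n)
    {A B : {D : Set (Fin 1 ⊕ Fin n) // IsDomSet (completeBipartiteGraph (Fin 1) (Fin n)) D ∧
      D.ncard ≤ k}}
    (h : (KDomGraph (completeBipartiteGraph (Fin 1) (Fin n)) k).Adj A B) : Sum.inl 0 ∈ A.1 := by
  by_contra hc
  obtain ⟨v, hv⟩ := KDomGraph.toggles_nonempty_of_adj h
  rw [star_toggles_eq_empty hk A.2.1 hc] at hv
  exact hv

end Star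

theorem kDomGraph_star_eulerian_iff_general (n k : ℕ) (hk1 : 1 < k) (hk2 : k ≤ n) :
    IsEulerian (KDomGraph (completeBipartiteGraph (Fin 1) (Fin n)) k) ↔
      Even n ∧ Odd k := by
  have hdeg := ncard_neighborSet_kDomGraph_star (k := k) hk2
  let center : {D : Set (Fin 1 ⊕ Fin n) //
      IsDomSet (completeBipartiteGraph (Fin 1) (Fin n)) D ∧ D.ncard ≤ k} :=
    ⟨{Sum.inl 0}, isDomSet_star_of_center_mem rfl, (Set.ncard_singleton _).trans_le hk1.le⟩
  constructor
  · rintro ⟨heven, -⟩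
    obtain ⟨A, hcA, -, hAk⟩ := Set.exists_subsuperset_card_eq (n := k)
      (Set.singleton_subset_iff.2 (Set.mem_univ (Sum.inl 0 : Fin 1 ⊕ Fin n)))
      ((Set.ncard_singleton _).trans_le hk1.le)
      (by rw [Set.ncard_univ, Nat.card_sum, Nat.card_fin, Nat.card_fin]; omega)
    have hsmall := heven center
    have hfull := heven ⟨A, isDomSet_star_of_center_mem (hcA rfl), hAk.le⟩
    rw [hdeg] at hsmall hfull
    simp only [center, Set.mem_singleton_iff, Set.ncard_singleton, hk1, hcA rfl, hAk, lt_irrefl,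
      if_true, if_false] at hsmall hfull
    exact ⟨hsmall, ((Nat.even_sub' hk1.le).1 hfull).2 odd_one⟩
  · rintro ⟨hn, hk⟩
    refine ⟨fun A => ?_, fun u v x y huv hxy => ?_⟩
    · rw [hdeg]
      split_ifs
      exacts [hn, Nat.Odd.sub_odd hk odd_one, .zero]
    · have hreach : ∀ {a b}, (KDomGraph _ k).Adj a b → (KDomGraph _ k).Reachable a center :=
        fun h => KDomGraph.reachable_of_subset (Set.toFinite _)
          (Set.singleton_subset_iff.2 (center_mem_of_adj_kDomGraph_star hk2 h))
      exact (hreach huv).trans (hreach hxy).symm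

/-- For `n ≥ 2` and `1 < k ≤ n`, the `k`-dominating graph of the star `K_{1,n}` is
Eulerian iff `n` is even and `k` is odd. -/
theorem kDomGraph_star_eulerian_iff (n k : ℕ) (hn : 2 ≤ n) (hk1 : 1 < k) (hk2 : k ≤ n) :
    IsEulerian (KDomGraph (completeBipartiteGraph (Fin 1) (Fin n)) k) ↔
      Even n ∧ Odd k :=
  kDomGraph_star_eulerian_iff_general n k hk1 hk2
end
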